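/- Theorem 5.2(ii) (at most one real eigenvalue). Assume Im V(x) ≥ 0 for almost every x ∈ (0,2π) and Im V(x) > 0 on a set of positive Lebesgue measure. Let λ₁, λ₂ ∈ ℝ with λ₁ ≠ λ₂. Then there do not exist functions f₁, f₂ : [0,2π] → ℂ, each not identically zero and each absolutely continuous with derivative f_j′, such that for j = 1, 2 both equations hold for almost every x ∈ (0,2π): i f_j′(x) + V(x) f_j(x) + f_j(2π) k(x) = λ_j f_j(x) and i f_j′(x) + conj(V(x)) f_j(x) = λ_j f_j(x). -/

import Mathlib

/-!
Subtracting the two equations for `f_j` gives `2i Im V · f_j + f_j(2π) k = 0`, so on the set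
`S = {Im V > 0}` the function `g = f₂(2π) f₁ - f₁(2π) f₂` vanishes. Some point of `S` is an
accumulation point of `S` at which both `f_j` are differentiable; there `g' = 0`, and
the adjoint equations `i f_j' = (λ_j - conj V) f_j` turn `g = g' = 0` into
`(λ₁ - λ₂) f₂(2π) f₁ = 0`. This contradicts Grönwall's lemma, by which a nonzero solution of
`|f'| ≤ C |f|` has no zeros.
-/

open MeasureTheory Real Complex

/-- `f : [0,2π] → ℂ` is absolutely continuous with derivative `f'`:
`f' ∈ L¹(0,2π)` and `f x = f 0 + ∫₀ˣ f'` for all `x ∈ [0,2π]`. -/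
def IsACWithDeriv (f f' : ℝ → ℂ) : Prop :=
  MeasureTheory.IntegrableOn f' (Set.Ioc 0 (2 * Real.pi)) ∧
    ∀ x ∈ Set.Icc (0:ℝ) (2 * Real.pi), f x = f 0 + ∫ t in (0:ℝ)..x, f' t

open Set Filter Topology intervalIntegral

section Gronwall

variable {E : Type*} [NormedAddCommGroup E] [NormedSpace ℝ E] [CompleteSpace E]

theorem eq_zero_of_norm_le_mul_norm_integral_left {u : ℝ → E} {a b C : ℝ}
    (hu : ContinuousOn u (Icc a b)) (hle : ∀ x ∈ Icc a b, ‖u x‖ ≤ C * ‖∫ t in a..x, u t‖) :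
    ∀ x ∈ Icc a b, u x = 0 := by
  intro x hx
  have hab : a ≤ b := hx.1.trans hx.2
  have hprim : ∀ y ∈ Icc a b, ∫ t in a..y, u t = 0 := by
    refine eq_zero_of_abs_deriv_le_mul_abs_self_of_eq_zero_right (K := C) ?_ ?_ integral_same
      fun y hy => hle y (Ico_subset_Icc_self hy)
    · simpa [uIcc_of_le hab] using
        continuousOn_primitive_interval (hu.integrableOn_Icc.mono_set (uIcc_of_le hab).subset)
    · intro y hy
      have hIcc : Icc a b ∈ 𝓝[>] y := Icc_mem_nhdsGT_of_mem hy
      exact integral_hasDerivWithinAt_right (t := Ioi y)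
        ((hu.mono (Icc_subset_Icc_right hy.2.le)).intervalIntegrable_of_Icc hy.1)
        ((hu.stronglyMeasurableAtFilter_nhdsWithin measurableSet_Icc y).filter_mono
          (nhdsWithin_le_of_mem hIcc))
        ((hu y (Ico_subset_Icc_self hy)).mono_of_mem_nhdsWithin hIcc)
  simpa [hprim x hx] using hle x hx

theorem eq_zero_of_norm_le_mul_norm_integral {u : ℝ → E} {a b x₀ C : ℝ}
    (hu : ContinuousOn u (Icc a b)) (hx₀ : x₀ ∈ Icc a b)
    (hle : ∀ x ∈ Icc a b, ‖u x‖ ≤ C * ‖∫ t in x₀..x, u t‖) :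
    ∀ x ∈ Icc a b, u x = 0 := by
  intro x hx
  rcases le_total x₀ x with hx₀x | hxx₀
  · exact eq_zero_of_norm_le_mul_norm_integral_left (hu.mono (Icc_subset_Icc_left hx₀.1))
      (fun y hy => hle y ⟨hx₀.1.trans hy.1, hy.2⟩) x ⟨hx₀x, hx.2⟩
  · have hneg : ContinuousOn (fun t => u (-t)) (Icc (-x₀) (-a)) :=
      hu.comp continuousOn_neg fun t ht => ⟨le_neg.1 ht.2, (neg_le.1 ht.1).trans hx₀.2⟩
    refine neg_neg x ▸ eq_zero_of_norm_le_mul_norm_integral_left (C := C) hneg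
      (fun y hy => ?_) (-x) ⟨neg_le_neg hxx₀, neg_le_neg hx.1⟩
    rw [integral_comp_neg, neg_neg, integral_symm, norm_neg]
    exact hle (-y) ⟨le_neg.1 hy.2, (neg_le.1 hy.1).trans hx₀.2⟩

end Gronwall

theorem exists_mem_accPt_of_measure_ne_zero {X : Type*} [TopologicalSpace X]
    [SecondCountableTopology X] [MeasurableSpace X] {μ : Measure X} [NullSingletonClass μ]
    {s : Set X} (hs : μ s ≠ 0) : ∃ x ∈ s, AccPt x (𝓟 s) := by
  by_contra! h
  have : DiscreteTopology s := discreteTopology_of_noAccPts h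
  exact hs <| (countable_coe_iff.mp <|
    TopologicalSpace.separableSpace_iff_countable.mp inferInstance).measure_zero μ

theorem HasDerivAt.eq_zero_of_accPt {𝕜 F : Type*} [NontriviallyNormedField 𝕜]
    [NormedAddCommGroup F] [NormedSpace 𝕜 F] {f : 𝕜 → F} {f' : F} {s : Set 𝕜} {x : 𝕜}
    (hf : HasDerivAt f f' x) (hfs : ∀ y ∈ s, f y = 0) (hx : x ∈ s) (hacc : AccPt x (𝓟 s)) :
    f' = 0 :=
  hacc.uniqueDiffWithinAt.eq_deriv s hf.hasDerivWithinAt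
    ((hasDerivWithinAt_const x s 0).congr hfs (hfs x hx))

namespace IsACWithDeriv

variable {f f' : ℝ → ℂ}

theorem intervalIntegrable (hf : IsACWithDeriv f f') {x y : ℝ} (hx : x ∈ Icc 0 (2 * π))
    (hy : y ∈ Icc 0 (2 * π)) : IntervalIntegrable f' volume x y :=
  ((intervalIntegrable_iff_integrableOn_Ioc_of_le two_pi_pos.le).2 hf.1).mono_set
    (uIcc_subset_uIcc (by rwa [uIcc_of_le two_pi_pos.le]) (by rwa [uIcc_of_le two_pi_pos.le]))

theorem continuousOn (hf : IsACWithDeriv f f') : ContinuousOn f (Icc 0 (2 * π)) := by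
  have hprim := continuousOn_primitive_interval' (hf.intervalIntegrable
    (left_mem_Icc.2 two_pi_pos.le) (right_mem_Icc.2 two_pi_pos.le)) left_mem_uIcc
  rw [uIcc_of_le two_pi_pos.le] at hprim
  exact (continuousOn_const.add hprim).congr hf.2

theorem sub_eq_integral (hf : IsACWithDeriv f f') {x y : ℝ} (hx : x ∈ Icc 0 (2 * π))
    (hy : y ∈ Icc 0 (2 * π)) : f x - f y = ∫ t in y..x, f' t := by
  have h0 : (0 : ℝ) ∈ Icc 0 (2 * π) := left_mem_Icc.2 two_pi_pos.le
  rw [hf.2 x hx, hf.2 y hy, add_sub_add_left_eq_sub,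
    integral_interval_sub_left (hf.intervalIntegrable h0 hx) (hf.intervalIntegrable h0 hy)]

theorem ae_hasDerivAt (hf : IsACWithDeriv f f') :
    ∀ᵐ x ∂volume.restrict (Ioo 0 (2 * π)), HasDerivAt f (f' x) x := by
  have h0 : (0 : ℝ) ∈ Icc 0 (2 * π) := left_mem_Icc.2 two_pi_pos.le
  rw [ae_restrict_iff' measurableSet_Ioo]
  filter_upwards [(hf.intervalIntegrable h0 (right_mem_Icc.2 two_pi_pos.le)).ae_hasDerivAt_integral]
    with x hx hxI
  rw [uIcc_of_le two_pi_pos.le] at hx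
  refine ((hx (Ioo_subset_Icc_self hxI) 0 h0).const_add (f 0)).congr_of_eventuallyEq ?_
  filter_upwards [Icc_mem_nhds hxI.1 hxI.2] with y hy using hf.2 y hy

theorem eq_zero_of_norm_deriv_le (hf : IsACWithDeriv f f') {C : ℝ}
    (hbd : ∀ᵐ x ∂volume.restrict (Ioo 0 (2 * π)), ‖f' x‖ ≤ C * ‖f x‖) {x₀ : ℝ}
    (hx₀ : x₀ ∈ Icc 0 (2 * π)) (h0 : f x₀ = 0) : ∀ x ∈ Icc 0 (2 * π), f x = 0 := by
  have hbd' : ∀ᵐ x ∂volume.restrict (Ioc 0 (2 * π)), ‖f' x‖ ≤ C * ‖f x‖ := by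
    rwa [← Measure.restrict_congr_set Ioo_ae_eq_Ioc]
  suffices h : ∀ x ∈ Icc 0 (2 * π), ‖f x‖ = 0 from fun x hx => norm_eq_zero.1 (h x hx)
  refine eq_zero_of_norm_le_mul_norm_integral (C := |C|) hf.continuousOn.norm hx₀ fun x hx => ?_
  have hsub : uIoc x₀ x ⊆ Ioc 0 (2 * π) :=
    Ioc_subset_Ioc (le_min hx₀.1 hx.1) (max_le hx₀.2 hx.2)
  calc ‖‖f x‖‖ = ‖∫ t in x₀..x, f' t‖ := by
        rw [norm_norm, ← hf.sub_eq_integral hx hx₀, h0, sub_zero]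
    _ ≤ |∫ t in x₀..x, C * ‖f t‖| :=
        norm_integral_le_abs_of_norm_le (ae_restrict_of_ae_restrict_of_subset hsub hbd')
          ((hf.continuousOn.norm.mono (uIcc_subset_Icc hx₀ hx)).intervalIntegrable.const_mul C)
    _ = |C| * ‖∫ t in x₀..x, ‖f t‖‖ := by
        rw [intervalIntegral.integral_const_mul, abs_mul, Real.norm_eq_abs]

end IsACWithDeriv

theorem norm_le_of_I_mul_add_conj_mul_eq {d v z : ℂ} {lam : ℝ}
    (h : I * d + starRingEnd ℂ v * z = lam * z) : ‖d‖ ≤ (|lam| + ‖v‖) * ‖z‖ := by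
  have hd : d = -I * ((lam - starRingEnd ℂ v) * z) := by
    linear_combination -I * h + d * I_mul_I
  rw [hd, norm_mul, norm_neg, norm_I, one_mul, norm_mul]
  gcongr
  exact (norm_sub_le _ _).trans_eq (by rw [norm_real, Real.norm_eq_abs, RCLike.norm_conj])

theorem IsACWithDeriv.ne_zero_of_adjoint_eq {V f f' : ℝ → ℂ} {lam : ℝ}
    (hV : MemLp V ⊤ (volume.restrict (Ioo 0 (2 * π)))) (hf : IsACWithDeriv f f')
    (hadj : ∀ᵐ x ∂volume.restrict (Ioo 0 (2 * π)),
      I * f' x + starRingEnd ℂ (V x) * f x = lam * f x)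
    (hnz : ∃ x ∈ Icc 0 (2 * π), f x ≠ 0) : ∀ x ∈ Icc 0 (2 * π), f x ≠ 0 := by
  intro x hx hfx
  obtain ⟨y, hy, hfy⟩ := hnz
  refine hfy (hf.eq_zero_of_norm_deriv_le
    (C := |lam| + lpNorm V ⊤ (volume.restrict (Ioo 0 (2 * π)))) ?_ hx hfx y hy)
  filter_upwards [hadj, ae_le_lpNorm_exponent_top hV] with t ht hVt
  exact (norm_le_of_I_mul_add_conj_mul_eq ht).trans (by gcongr)

theorem mul_eq_mul_of_eigen_eq_of_im_pos {v k c₁ c₂ d₁ d₂ z₁ z₂ l₁ l₂ : ℂ} (hv : 0 < v.im)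
    (h₁ : I * d₁ + v * z₁ + c₁ * k = l₁ * z₁) (h₁' : I * d₁ + starRingEnd ℂ v * z₁ = l₁ * z₁)
    (h₂ : I * d₂ + v * z₂ + c₂ * k = l₂ * z₂) (h₂' : I * d₂ + starRingEnd ℂ v * z₂ = l₂ * z₂) :
    c₂ * z₁ = c₁ * z₂ := by
  have hv' : v - starRingEnd ℂ v ≠ 0 := by
    rw [sub_conj]
    exact mul_ne_zero (ofReal_ne_zero.2 (by positivity)) I_ne_zero
  refine mul_left_cancel₀ hv' ?_
  linear_combination c₂ * (h₁ - h₁') - c₁ * (h₂ - h₂')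

theorem at_most_one_real_eigenvalue_general
    (V k : ℝ → ℂ)
    (hV : MeasureTheory.MemLp V ⊤ (MeasureTheory.volume.restrict (Set.Ioo 0 (2 * Real.pi))))
    (hVIpos : 0 < MeasureTheory.volume {x ∈ Set.Ioo (0:ℝ) (2 * Real.pi) | 0 < (V x).im})
    (lam₁ lam₂ : ℝ) (hne : lam₁ ≠ lam₂) :
    ¬ ∃ f₁ f₁' f₂ f₂' : ℝ → ℂ,
      IsACWithDeriv f₁ f₁' ∧ (∃ x ∈ Set.Icc (0:ℝ) (2 * Real.pi), f₁ x ≠ 0) ∧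
      IsACWithDeriv f₂ f₂' ∧ (∃ x ∈ Set.Icc (0:ℝ) (2 * Real.pi), f₂ x ≠ 0) ∧
      (∀ᵐ x ∂(MeasureTheory.volume.restrict (Set.Ioo 0 (2 * Real.pi))),
        Complex.I * f₁' x + V x * f₁ x + f₁ (2 * Real.pi) * k x = (lam₁ : ℂ) * f₁ x) ∧
      (∀ᵐ x ∂(MeasureTheory.volume.restrict (Set.Ioo 0 (2 * Real.pi))),
        Complex.I * f₁' x + (starRingEnd ℂ) (V x) * f₁ x = (lam₁ : ℂ) * f₁ x) ∧
      (∀ᵐ x ∂(MeasureTheory.volume.restrict (Set.Ioo 0 (2 * Real.pi))),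
        Complex.I * f₂' x + V x * f₂ x + f₂ (2 * Real.pi) * k x = (lam₂ : ℂ) * f₂ x) ∧
      (∀ᵐ x ∂(MeasureTheory.volume.restrict (Set.Ioo 0 (2 * Real.pi))),
        Complex.I * f₂' x + (starRingEnd ℂ) (V x) * f₂ x = (lam₂ : ℂ) * f₂ x) := by
  rintro ⟨f₁, f₁', f₂, f₂', hf₁, hnz₁, hf₂, hnz₂, heq₁, hadj₁, heq₂, hadj₂⟩
  have hne₁ := hf₁.ne_zero_of_adjoint_eq hV hadj₁ hnz₁
  have hne₂ := hf₂.ne_zero_of_adjoint_eq hV hadj₂ hnz₂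
  have hgood := (ae_restrict_iff' measurableSet_Ioo).1 <| hf₁.ae_hasDerivAt.and <|
    hf₂.ae_hasDerivAt.and <| heq₁.and <| hadj₁.and <| heq₂.and hadj₂
  -- the `_` is the set where `hgood` holds, fixed by unification with `measure_inter_conull hgood`
  set A := {x ∈ Ioo 0 (2 * π) | 0 < (V x).im} ∩ {x | _} with hA
  obtain ⟨x, hxA, hacc⟩ := exists_mem_accPt_of_measure_ne_zero (μ := volume) (s := A)
    (by rw [hA, measure_inter_conull hgood]; exact hVIpos.ne')
  have hprop : ∀ y ∈ A, f₂ (2 * π) * f₁ y - f₁ (2 * π) * f₂ y = 0 := by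
    rintro y ⟨⟨hyI, hVy⟩, hy⟩
    obtain ⟨-, -, e₁, a₁, e₂, a₂⟩ := hy hyI
    exact sub_eq_zero.2 (mul_eq_mul_of_eigen_eq_of_im_pos hVy e₁ a₁ e₂ a₂)
  obtain ⟨d₁, d₂, -, a₁, -, a₂⟩ := hxA.2 hxA.1.1
  have hderiv : f₂ (2 * π) * f₁' x - f₁ (2 * π) * f₂' x = 0 :=
    ((d₁.const_mul _).sub (d₂.const_mul _)).eq_zero_of_accPt hprop hxA hacc
  have key : ((lam₁ : ℂ) - lam₂) * (f₂ (2 * π) * f₁ x) = 0 := by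
    linear_combination f₁ (2 * π) * a₂ - f₂ (2 * π) * a₁ + I * hderiv +
      (starRingEnd ℂ (V x) - lam₂) * hprop x hxA
  simp [sub_eq_zero, hne, hne₁ x (Ioo_subset_Icc_self hxA.1.1),
    hne₂ _ (right_mem_Icc.2 two_pi_pos.le)] at key

/-- Theorem 5.2(ii) (at most one real eigenvalue): if `Im V ≥ 0` a.e. and `Im V > 0` on a
set of positive measure, then for distinct reals `λ₁ ≠ λ₂` there are no nonzero functions
`f₁, f₂` satisfying simultaneously `i f_j' + V f_j + f_j(2π)k = λ_j f_j` and
`i f_j' + conj(V) f_j = λ_j f_j` a.e. on `(0,2π)`. -/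
theorem at_most_one_real_eigenvalue
    (V k : ℝ → ℂ)
    (hV : MeasureTheory.MemLp V ⊤ (MeasureTheory.volume.restrict (Set.Ioo 0 (2 * Real.pi))))
    (hk : MeasureTheory.MemLp k 2 (MeasureTheory.volume.restrict (Set.Ioo 0 (2 * Real.pi))))
    (hVI : ∀ᵐ x ∂(MeasureTheory.volume.restrict (Set.Ioo 0 (2 * Real.pi))), 0 ≤ (V x).im)
    (hVIpos : 0 < MeasureTheory.volume {x ∈ Set.Ioo (0:ℝ) (2 * Real.pi) | 0 < (V x).im})
    (lam₁ lam₂ : ℝ) (hne : lam₁ ≠ lam₂) :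
    ¬ ∃ f₁ f₁' f₂ f₂' : ℝ → ℂ,
      IsACWithDeriv f₁ f₁' ∧ (∃ x ∈ Set.Icc (0:ℝ) (2 * Real.pi), f₁ x ≠ 0) ∧
      IsACWithDeriv f₂ f₂' ∧ (∃ x ∈ Set.Icc (0:ℝ) (2 * Real.pi), f₂ x ≠ 0) ∧
      (∀ᵐ x ∂(MeasureTheory.volume.restrict (Set.Ioo 0 (2 * Real.pi))),
        Complex.I * f₁' x + V x * f₁ x + f₁ (2 * Real.pi) * k x = (lam₁ : ℂ) * f₁ x) ∧
      (∀ᵐ x ∂(MeasureTheory.volume.restrict (Set.Ioo 0 (2 * Real.pi))),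
        Complex.I * f₁' x + (starRingEnd ℂ) (V x) * f₁ x = (lam₁ : ℂ) * f₁ x) ∧
      (∀ᵐ x ∂(MeasureTheory.volume.restrict (Set.Ioo 0 (2 * Real.pi))),
        Complex.I * f₂' x + V x * f₂ x + f₂ (2 * Real.pi) * k x = (lam₂ : ℂ) * f₂ x) ∧
      (∀ᵐ x ∂(MeasureTheory.volume.restrict (Set.Ioo 0 (2 * Real.pi))),
        Complex.I * f₂' x + (starRingEnd ℂ) (V x) * f₂ x = (lam₂ : ℂ) * f₂ x) :=
  at_most_one_real_eigenvalue_general V k hV hVIpos lam₁ lam₂ hne
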